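/- Let (a_α) be a quasi-central bounded net in a Banach algebra A, with associated net ideals I(a_α) = {a : a a_α → a}, K(a_α) = {a : a a_α → 0}, C(a_α) = {a : (a a_α) converges}, L(a_α) = {lim a a_α : a ∈ C(a_α)}. Assume L(a_α) = I(a_α), so that C(a_α) = I(a_α) ⊕ K(a_α). If every continuous derivation A → C(a_α)* is inner, then every continuous derivation A → I(a_α)* is inner and every continuous derivation A → K(a_α)* is inner. -/

import Mathlib

/-!
The map `x ↦ lim x a_α` is a bounded linear projection of `C(a_α)` onto `L(a_α) = I(a_α)`; it
commutes with left multiplication trivially and with right multiplication because the net is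
quasi-central, so it and its complement `x ↦ x - lim x a_α` (onto `K(a_α)`) are `A`-bimodule maps.
Thus `I(a_α)` and `K(a_α)` are bimodule retracts of `C(a_α)`. For a retract `N ⇄ M`, a derivation
into `N*` pulled back along the projection is a derivation into `M*`; if it is inner, restricting
its implementing functional along the inclusion shows that the original derivation is inner.
-/

open ContinuousLinearMap Filter Topology

namespace Paper

structure Bimod (A : Type*) [NormedRing A] [NormedAlgebra ℂ A]
    (X : Type*) [NormedAddCommGroup X] [NormedSpace ℂ X] where
  l : A → X →L[ℂ] X
  r : A → X →L[ℂ] X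
  l_mul : ∀ a b x, l (a * b) x = l a (l b x)
  r_mul : ∀ a b x, r (a * b) x = r b (r a x)
  lr : ∀ a b x, l a (r b x) = r b (l a x)

variable {A : Type*} [NormedRing A] [NormedAlgebra ℂ A]
variable {X : Type*} [NormedAddCommGroup X] [NormedSpace ℂ X]

noncomputable def Bimod.dual (M : Bimod A X) : Bimod A (X →L[ℂ] ℂ) where
  l a := (compL ℂ X X ℂ).flip (M.r a)
  r a := (compL ℂ X X ℂ).flip (M.l a)
  l_mul a b f := by ext x; simp [M.r_mul]
  r_mul a b f := by ext x; simp [M.l_mul]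
  lr a b f := by ext x; simp [M.lr]

def IsDerivation (M : Bimod A X) (D : A →L[ℂ] X) : Prop :=
  ∀ a b, D (a * b) = M.l a (D b) + M.r b (D a)

def IsInner (M : Bimod A X) (D : A →L[ℂ] X) : Prop :=
  ∃ x, ∀ a, D a = M.l a x - M.r a x

noncomputable def Bimod.restrict (M : Bimod A X) (Y : Submodule ℂ X)
    (hl : ∀ a, ∀ y ∈ Y, M.l a y ∈ Y) (hr : ∀ a, ∀ y ∈ Y, M.r a y ∈ Y) :
    Bimod A Y where
  l a := ((M.l a).comp Y.subtypeL).codRestrict Y fun y => hl a y y.2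
  r a := ((M.r a).comp Y.subtypeL).codRestrict Y fun y => hr a y y.2
  l_mul a b y := Subtype.ext (M.l_mul a b y)
  r_mul a b y := Subtype.ext (M.r_mul a b y)
  lr a b y := Subtype.ext (M.lr a b y)

noncomputable def algBimod (A : Type*) [NormedRing A] [NormedAlgebra ℂ A] : Bimod A A where
  l a := ContinuousLinearMap.mul ℂ A a
  r a := (ContinuousLinearMap.mul ℂ A).flip a
  l_mul a b x := mul_assoc a b x
  r_mul a b x := (mul_assoc x a b).symm
  lr a b x := (mul_assoc a x b).symm

noncomputable def idealBimod (I : Submodule ℂ A)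
    (hL : ∀ a, ∀ x ∈ I, a * x ∈ I) (hR : ∀ a, ∀ x ∈ I, x * a ∈ I) :
    Bimod A I where
  l a := ((ContinuousLinearMap.mul ℂ A a).comp I.subtypeL).codRestrict I fun x => hL a x x.2
  r a := (((ContinuousLinearMap.mul ℂ A).flip a).comp I.subtypeL).codRestrict I fun x => hR a x x.2
  l_mul a b x := Subtype.ext (mul_assoc a b (x : A))
  r_mul a b x := Subtype.ext (mul_assoc (x : A) a b).symm
  lr a b x := Subtype.ext (mul_assoc a (x : A) b).symm

section BimodHom

variable {Y : Type*} [NormedAddCommGroup Y] [NormedSpace ℂ Y]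

def Bimod.IsHom (M : Bimod A X) (N : Bimod A Y) (T : X →L[ℂ] Y) : Prop :=
  (∀ a x, T (M.l a x) = N.l a (T x)) ∧ ∀ a x, T (M.r a x) = N.r a (T x)

section Comp

variable {M : Bimod A X} {N : Bimod A Y} {S T : X →L[ℂ] Y}

theorem Bimod.IsHom.sub (hS : M.IsHom N S) (hT : M.IsHom N T) : M.IsHom N (S - T) :=
  ⟨fun a x => by simp [hS.1, hT.1], fun a x => by simp [hS.2, hT.2]⟩

theorem Bimod.IsHom.codRestrict (hT : M.IsHom N T) (Z : Submodule ℂ Y)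
    (hl : ∀ a, ∀ z ∈ Z, N.l a z ∈ Z) (hr : ∀ a, ∀ z ∈ Z, N.r a z ∈ Z) (hTZ : ∀ x, T x ∈ Z) :
    M.IsHom (N.restrict Z hl hr) (T.codRestrict Z hTZ) :=
  ⟨fun a x => Subtype.ext (hT.1 a x), fun a x => Subtype.ext (hT.2 a x)⟩

theorem Bimod.IsHom.precomp (hT : M.IsHom N T) : N.dual.IsHom M.dual (precomp ℂ T) :=
  ⟨fun a f => by ext x; simp [Bimod.dual, hT.2], fun a f => by ext x; simp [Bimod.dual, hT.1]⟩

theorem IsDerivation.comp (hT : M.IsHom N T) {D : A →L[ℂ] X} (hD : IsDerivation M D) :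
    IsDerivation N (T.comp D) :=
  fun a b => by simp [hD a b, hT.1, hT.2]

theorem IsInner.comp (hT : M.IsHom N T) {D : A →L[ℂ] X} (hD : IsInner M D) :
    IsInner N (T.comp D) :=
  let ⟨x, hx⟩ := hD
  ⟨T x, fun a => by simp [hx, hT.1, hT.2]⟩

end Comp

theorem Bimod.isInner_dual_of_retract {M : Bimod A X} {N : Bimod A Y}
    {i : Y →L[ℂ] X} {P : X →L[ℂ] Y} (hi : N.IsHom M i) (hP : M.IsHom N P) (hPi : ∀ y, P (i y) = y)
    (hM : ∀ D : A →L[ℂ] (X →L[ℂ] ℂ), IsDerivation M.dual D → IsInner M.dual D)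
    (D : A →L[ℂ] (Y →L[ℂ] ℂ)) (hD : IsDerivation N.dual D) : IsInner N.dual D := by
  have h := (hM _ (hD.comp hP.precomp)).comp hi.precomp
  have hD' : (precomp ℂ i).comp ((precomp ℂ P).comp D) = D := by
    ext a y
    simp [hPi]
  rwa [hD'] at h

end BimodHom

theorem idealBimod_isHom_subtypeL (J : Submodule ℂ A)
    (hL : ∀ a, ∀ x ∈ J, a * x ∈ J) (hR : ∀ a, ∀ x ∈ J, x * a ∈ J) :
    (idealBimod J hL hR).IsHom (algBimod A) J.subtypeL :=
  ⟨fun _ _ => rfl, fun _ _ => rfl⟩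

section Net

variable {ι : Type*} (p : Filter ι) (e : ι → A)

-- The net ideals `I(a_α)`, `K(a_α)` and `C(a_α)` of the paper, for the net `e` along `p`.
def netIdealI : Submodule ℂ A where
  carrier := {a | Tendsto (fun i => a * e i) p (𝓝 a)}
  add_mem' ha hb := by simpa [add_mul] using ha.add hb
  zero_mem' := by simpa using tendsto_const_nhds
  smul_mem' c _ ha := by simpa [smul_mul_assoc] using ha.const_smul c

def netIdealK : Submodule ℂ A where
  carrier := {a | Tendsto (fun i => a * e i) p (𝓝 0)}
  add_mem' ha hb := by simpa [add_mul] using ha.add hb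
  zero_mem' := by simpa using tendsto_const_nhds
  smul_mem' c _ ha := by simpa [smul_mul_assoc] using ha.const_smul c

def netIdealC : Submodule ℂ A where
  carrier := {a | ∃ x, Tendsto (fun i => a * e i) p (𝓝 x)}
  add_mem' := fun ⟨x, hx⟩ ⟨y, hy⟩ => ⟨x + y, by simpa [add_mul] using hx.add hy⟩
  zero_mem' := ⟨0, by simpa using tendsto_const_nhds⟩
  smul_mem' c _ := fun ⟨x, hx⟩ => ⟨c • x, by simpa [smul_mul_assoc] using hx.const_smul c⟩

noncomputable def netLim (a : A) : A :=
  limUnder p fun i => a * e i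

variable {p e}

theorem netIdealI_le_netIdealC : netIdealI p e ≤ netIdealC p e :=
  fun a ha => ⟨a, ha⟩

theorem netIdealK_le_netIdealC : netIdealK p e ≤ netIdealC p e :=
  fun _ ha => ⟨0, ha⟩

theorem tendsto_netLim {a : A} (ha : a ∈ netIdealC p e) :
    Tendsto (fun i => a * e i) p (𝓝 (netLim p e a)) :=
  tendsto_nhds_limUnder ha

theorem sub_netLim_mem_netIdealK {a : A} (ha : a ∈ netIdealC p e)
    (hLa : netLim p e a ∈ netIdealI p e) : a - netLim p e a ∈ netIdealK p e := by
  have h : Tendsto (fun i => (a - netLim p e a) * e i) p (𝓝 0) := by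
    simpa [sub_mul] using (tendsto_netLim ha).sub hLa
  exact h

variable [p.NeBot]

theorem netLim_of_mem_netIdealI {a : A} (ha : a ∈ netIdealI p e) : netLim p e a = a :=
  Tendsto.limUnder_eq ha

theorem netLim_of_mem_netIdealK {a : A} (ha : a ∈ netIdealK p e) : netLim p e a = 0 :=
  Tendsto.limUnder_eq ha

theorem netLim_mul_left {a : A} (ha : a ∈ netIdealC p e) (b : A) :
    netLim p e (b * a) = b * netLim p e a :=
  Tendsto.limUnder_eq <| by simpa [mul_assoc] using (tendsto_netLim ha).const_mul b

theorem netLim_mul_right (hqc : ∀ b : A, Tendsto (fun i => b * e i - e i * b) p (𝓝 0))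
    {a : A} (ha : a ∈ netIdealC p e) (b : A) :
    netLim p e (a * b) = netLim p e a * b := by
  refine Tendsto.limUnder_eq ?_
  have h := ((tendsto_netLim ha).mul_const b).add ((hqc b).const_mul a)
  rw [mul_zero, add_zero] at h
  refine h.congr fun i => ?_
  noncomm_ring

theorem norm_netLim_le {c : ℝ} (hc : ∀ i, ‖e i‖ ≤ c) {a : A} (ha : a ∈ netIdealC p e) :
    ‖netLim p e a‖ ≤ c * ‖a‖ :=
  le_of_tendsto (tendsto_netLim ha).norm <| Eventually.of_forall fun i =>
    calc ‖a * e i‖ ≤ ‖a‖ * ‖e i‖ := norm_mul_le _ _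
      _ ≤ c * ‖a‖ := by rw [mul_comm]; exact mul_le_mul_of_nonneg_right (hc i) (norm_nonneg a)

variable (p e) in
noncomputable def netLimL {c : ℝ} (hc : ∀ i, ‖e i‖ ≤ c) : netIdealC p e →L[ℂ] A :=
  LinearMap.mkContinuous
    (linearMapOfTendsto (fun a => netLim p e a)
      (fun i => (LinearMap.mulRight ℂ (e i)).comp (netIdealC p e).subtype)
      (tendsto_pi_nhds.2 fun a => tendsto_netLim a.2))
    c fun a => norm_netLim_le hc a.2

theorem isHom_netLimL (hqc : ∀ b : A, Tendsto (fun i => b * e i - e i * b) p (𝓝 0))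
    {c : ℝ} (hc : ∀ i, ‖e i‖ ≤ c)
    (hL : ∀ a, ∀ x ∈ netIdealC p e, a * x ∈ netIdealC p e)
    (hR : ∀ a, ∀ x ∈ netIdealC p e, x * a ∈ netIdealC p e) :
    (idealBimod _ hL hR).IsHom (algBimod A) (netLimL p e hc) :=
  ⟨fun b a => netLim_mul_left a.2 b, fun b a => netLim_mul_right hqc a.2 b⟩

end Net

theorem stmt_12_general
    {A : Type*} [NormedRing A] [NormedAlgebra ℂ A]
    (ι : Type*) (p : Filter ι) [p.NeBot] (e : ι → A)
    (hb : ∃ C : ℝ, ∀ i, ‖e i‖ ≤ C)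
    (hqc : ∀ a : A, Tendsto (fun i => a * e i - e i * a) p (𝓝 0))
    (Iid Kid Cid : Submodule ℂ A)
    (hIL : ∀ a : A, ∀ x ∈ Iid, a * x ∈ Iid) (hIR : ∀ a : A, ∀ x ∈ Iid, x * a ∈ Iid)
    (hKL : ∀ a : A, ∀ x ∈ Kid, a * x ∈ Kid) (hKR : ∀ a : A, ∀ x ∈ Kid, x * a ∈ Kid)
    (hCL : ∀ a : A, ∀ x ∈ Cid, a * x ∈ Cid) (hCR : ∀ a : A, ∀ x ∈ Cid, x * a ∈ Cid)
    (hIset : (Iid : Set A) = {a : A | Tendsto (fun i => a * e i) p (𝓝 a)})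
    (hKset : (Kid : Set A) = {a : A | Tendsto (fun i => a * e i) p (𝓝 0)})
    (hCset : (Cid : Set A) = {a : A | ∃ x : A, Tendsto (fun i => a * e i) p (𝓝 x)})
    -- $L(a_α) = I(a_α)$
    (hLI : {x : A | ∃ a : A, Tendsto (fun i => a * e i) p (𝓝 x)} = (Iid : Set A))
    (hC : ∀ D : A →L[ℂ] (↥Cid →L[ℂ] ℂ),
        IsDerivation (idealBimod Cid hCL hCR).dual D → IsInner (idealBimod Cid hCL hCR).dual D) :
    (∀ D : A →L[ℂ] (↥Iid →L[ℂ] ℂ),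
        IsDerivation (idealBimod Iid hIL hIR).dual D → IsInner (idealBimod Iid hIL hIR).dual D) ∧
    (∀ D : A →L[ℂ] (↥Kid →L[ℂ] ℂ),
        IsDerivation (idealBimod Kid hKL hKR).dual D → IsInner (idealBimod Kid hKL hKR).dual D) := by
  obtain ⟨c, hc⟩ := hb
  obtain rfl : Iid = netIdealI p e := SetLike.coe_injective hIset
  obtain rfl : Kid = netIdealK p e := SetLike.coe_injective hKset
  obtain rfl : Cid = netIdealC p e := SetLike.coe_injective hCset
  have hLmemI (a : netIdealC p e) : netLimL p e hc a ∈ netIdealI p e := by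
    rw [← SetLike.mem_coe, ← hLI]; exact ⟨a, tendsto_netLim a.2⟩
  have hL := isHom_netLimL hqc hc hCL hCR
  -- `Bimod.IsHom.codRestrict` lands in `(algBimod A).restrict J`, which is `idealBimod J` by `rfl`.
  constructor
  · exact Bimod.isInner_dual_of_retract
      ((idealBimod_isHom_subtypeL _ hIL hIR).codRestrict _ hCL hCR fun a =>
        netIdealI_le_netIdealC a.2)
      (hL.codRestrict _ hIL hIR hLmemI)
      (fun a => Subtype.ext (netLim_of_mem_netIdealI a.2)) hC
  · exact Bimod.isInner_dual_of_retract
      ((idealBimod_isHom_subtypeL _ hKL hKR).codRestrict _ hCL hCR fun a =>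
        netIdealK_le_netIdealC a.2)
      (((idealBimod_isHom_subtypeL _ hCL hCR).sub hL).codRestrict _ hKL hKR fun a =>
        sub_netLim_mem_netIdealK a.2 (hLmemI a))
      (fun a => Subtype.ext <| show (a : A) - netLim p e a = a by
        rw [netLim_of_mem_netIdealK a.2, sub_zero]) hC

theorem stmt_12
    {A : Type*} [NormedRing A] [NormedAlgebra ℂ A] [CompleteSpace A]
    (ι : Type*) (p : Filter ι) [p.NeBot] (e : ι → A)
    (hb : ∃ C : ℝ, ∀ i, ‖e i‖ ≤ C)
    (hqc : ∀ a : A, Tendsto (fun i => a * e i - e i * a) p (𝓝 0))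
    (Iid Kid Cid : Submodule ℂ A)
    (hIcl : IsClosed (Iid : Set A)) (hKcl : IsClosed (Kid : Set A))
    (hCcl : IsClosed (Cid : Set A))
    (hIL : ∀ a : A, ∀ x ∈ Iid, a * x ∈ Iid) (hIR : ∀ a : A, ∀ x ∈ Iid, x * a ∈ Iid)
    (hKL : ∀ a : A, ∀ x ∈ Kid, a * x ∈ Kid) (hKR : ∀ a : A, ∀ x ∈ Kid, x * a ∈ Kid)
    (hCL : ∀ a : A, ∀ x ∈ Cid, a * x ∈ Cid) (hCR : ∀ a : A, ∀ x ∈ Cid, x * a ∈ Cid)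
    (hIset : (Iid : Set A) = {a : A | Tendsto (fun i => a * e i) p (𝓝 a)})
    (hKset : (Kid : Set A) = {a : A | Tendsto (fun i => a * e i) p (𝓝 0)})
    (hCset : (Cid : Set A) = {a : A | ∃ x : A, Tendsto (fun i => a * e i) p (𝓝 x)})
    -- $L(a_α) = I(a_α)$
    (hLI : {x : A | ∃ a : A, Tendsto (fun i => a * e i) p (𝓝 x)} = (Iid : Set A))
    (hC : ∀ D : A →L[ℂ] (↥Cid →L[ℂ] ℂ),
        IsDerivation (idealBimod Cid hCL hCR).dual D → IsInner (idealBimod Cid hCL hCR).dual D) :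
    (∀ D : A →L[ℂ] (↥Iid →L[ℂ] ℂ),
        IsDerivation (idealBimod Iid hIL hIR).dual D → IsInner (idealBimod Iid hIL hIR).dual D) ∧
    (∀ D : A →L[ℂ] (↥Kid →L[ℂ] ℂ),
        IsDerivation (idealBimod Kid hKL hKR).dual D → IsInner (idealBimod Kid hKL hKR).dual D) :=
  stmt_12_general ι p e hb hqc Iid Kid Cid hIL hIR hKL hKR hCL hCR hIset hKset hCset hLI hC

end Paper
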